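/- arXiv:2304.00872 — 4 statements merged into one kernel-verified Lean document; each statement's English description precedes it below -/
import Mathlib

section
/- If the minimal pairwise velocity inner product A(v)(0) := min_{i,j} ⟨v_i(0), v_j(0)⟩ is strictly positive, then A(v)(t) := min_{i,j} ⟨v_i(t), v_j(t)⟩ is monotone increasing on the interval of existence; in particular A(v)(t) ≥ A(v)(0) > 0 for all t. -/
/-!
At a time where the minimal pairwise inner product `A` is positive, every pair `(i, j)` realizing
it has a nonnegative derivative: each alignment term `⟪v k, v j⟫ - ⟪v k, v i⟫ ⟪v i, v j⟫` is
nonnegative because `⟪v k, v i⟫ ≤ 1` and `⟪v i, v j⟫ = A ≤ ⟪v k, v j⟫`. The right lower Dini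
derivative of a finite minimum of differentiable functions is at least the least derivative of
a minimizer, so `A` cannot decrease while it stays positive, and a barrier argument shows it
stays positive.
-/

open scoped RealInnerProductSpace
open Set Filter Topology

section LowerEnvelope

variable {ι : Type*} [Fintype ι] [Nonempty ι]

noncomputable def lowerEnvelope (f : ι → ℝ → ℝ) (t : ℝ) : ℝ :=
  Finset.univ.inf' Finset.univ_nonempty fun p => f p t

variable {f : ι → ℝ → ℝ}

theorem lowerEnvelope_le (f : ι → ℝ → ℝ) (t : ℝ) (p : ι) : lowerEnvelope f t ≤ f p t :=
  Finset.inf'_le _ (Finset.mem_univ p)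

theorem exists_eq_lowerEnvelope (f : ι → ℝ → ℝ) (t : ℝ) : ∃ p, f p t = lowerEnvelope f t := by
  obtain ⟨p, -, hp⟩ := Finset.exists_mem_eq_inf' Finset.univ_nonempty fun p => f p t
  exact ⟨p, hp.symm⟩

theorem continuousAt_lowerEnvelope {x : ℝ} (hf : ∀ p, ContinuousAt (f p) x) :
    ContinuousAt (lowerEnvelope f) x :=
  ContinuousAt.finset_inf'_apply Finset.univ_nonempty fun p _ => hf p

theorem eventually_eq_lowerEnvelope_imp {x : ℝ} (hf : ∀ p, ContinuousAt (f p) x) :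
    ∀ᶠ z in 𝓝 x, ∀ p, f p z = lowerEnvelope f z → f p x = lowerEnvelope f x := by
  refine eventually_all.2 fun p => ?_
  rcases (lowerEnvelope_le f x p).eq_or_lt with hp | hp
  · exact Eventually.of_forall fun _ _ => hp.symm
  · have hgap := ((hf p).sub (continuousAt_lowerEnvelope hf)).eventually
      (eventually_gt_nhds (sub_pos.2 hp))
    filter_upwards [hgap] with z hz hzp
    exact absurd hzp (sub_pos.1 hz).ne'

theorem eventually_lt_slope_lowerEnvelope {d : ι → ℝ} {x r : ℝ}
    (hf : ∀ p, HasDerivAt (f p) (d p) x) (hr : ∀ p, f p x = lowerEnvelope f x → r < d p) :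
    ∀ᶠ z in 𝓝[>] x, r < slope (lowerEnvelope f) x z := by
  have hslope : ∀ᶠ z in 𝓝[>] x, ∀ p, f p x = lowerEnvelope f x → r < slope (f p) x z := by
    refine eventually_all.2 fun p => ?_
    by_cases hp : f p x = lowerEnvelope f x
    · have hlim := hasDerivAt_iff_tendsto_slope.1 (hf p)
      exact ((hlim.eventually (eventually_gt_nhds (hr p hp))).filter_mono
        (nhdsWithin_mono x fun z hz => ne_of_gt hz)).mono fun z hz _ => hz
    · exact Eventually.of_forall fun _ h => absurd h hp
  filter_upwards [nhdsWithin_le_nhds (eventually_eq_lowerEnvelope_imp fun p => (hf p).continuousAt),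
    hslope, self_mem_nhdsWithin] with z hmin hz (hxz : x < z)
  obtain ⟨q, hq⟩ := exists_eq_lowerEnvelope f z
  calc r < slope (f q) x z := hz q (hmin q hq)
    _ ≤ slope (lowerEnvelope f) x z := by
      rw [slope_def_field, slope_def_field, ← hq]
      gcongr
      exact lowerEnvelope_le f x q

variable {d : ι → ℝ → ℝ} {a b : ℝ}

/-- The barrier `lowerEnvelope f a - ε (t - a)` stays below the envelope: at a first contact the
envelope is still positive, so its lower Dini derivative is `≥ 0 > -ε`. -/
theorem lowerEnvelope_sub_mul_le (hf : ∀ p, ∀ t ∈ Icc a b, HasDerivAt (f p) (d p t) t)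
    (hmin : ∀ t ∈ Ico a b, 0 < lowerEnvelope f t → ∀ p, f p t = lowerEnvelope f t → 0 ≤ d p t)
    {ε : ℝ} (hε : 0 < ε) (hεb : ε * (b - a) < lowerEnvelope f a) :
    ∀ t ∈ Icc a b, lowerEnvelope f a - ε * (t - a) ≤ lowerEnvelope f t := by
  set c := lowerEnvelope f a
  -- bounds the lower Dini derivative of `-lowerEnvelope f`; it need only be sharp at contacts
  let f' : ℝ → ℝ := fun y =>
    if 0 < lowerEnvelope f y then 0 else Finset.univ.sup' Finset.univ_nonempty fun p => -d p y
  have hslope : ∀ y ∈ Ico a b, ∀ r, f' y < r →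
      ∃ᶠ z in 𝓝[>] y, slope (fun t => -lowerEnvelope f t) y z < r := by
    intro y hy r hr
    have hbound : ∀ p, f p y = lowerEnvelope f y → -r < d p y := by
      intro p hp
      by_cases hpos : 0 < lowerEnvelope f y
      · have : f' y = 0 := if_pos hpos
        linarith [hmin y hy hpos p hp]
      · have : f' y = _ := if_neg hpos
        linarith [Finset.le_sup' (fun p => -d p y) (Finset.mem_univ p)]
    refine (eventually_lt_slope_lowerEnvelope (fun p => hf p y (Ico_subset_Icc_self hy))
      hbound).frequently.mono fun z hz => ?_
    rw [slope_neg]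
    linarith
  have hcontact : ∀ y ∈ Ico a b, -lowerEnvelope f y = -c + ε * (y - a) → f' y < ε := by
    intro y hy hy_eq
    have : ε * (y - a) ≤ ε * (b - a) := by gcongr; exact hy.2.le
    have hpos : 0 < lowerEnvelope f y := by linarith
    simpa only [f', if_pos hpos] using hε
  intro t ht
  have hcont : ContinuousOn (fun t => -lowerEnvelope f t) (Icc a b) := fun y hy =>
    (continuousAt_lowerEnvelope fun p => (hf p y hy).continuousAt).neg.continuousWithinAt
  have hbarrier : ∀ y, HasDerivAt (fun t => -c + ε * (t - a)) ε y := fun y =>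
    ((((hasDerivAt_id y).sub_const a).const_mul ε).const_add (-c)).congr_deriv (mul_one ε)
  have := image_le_of_liminf_slope_right_lt_deriv_boundary hcont hslope (by simp [c]) hbarrier
    hcontact ht
  linarith

theorem lowerEnvelope_left_le (hf : ∀ p, ∀ t ∈ Icc a b, HasDerivAt (f p) (d p t) t)
    (hmin : ∀ t ∈ Ico a b, 0 < lowerEnvelope f t → ∀ p, f p t = lowerEnvelope f t → 0 ≤ d p t)
    (ha : 0 < lowerEnvelope f a) {t : ℝ} (ht : t ∈ Icc a b) :
    lowerEnvelope f a ≤ lowerEnvelope f t := by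
  have hsmall : ∀ᶠ ε in 𝓝[>] (0 : ℝ), ε * (b - a) < lowerEnvelope f a :=
    nhdsWithin_le_nhds <| (continuous_id.mul continuous_const).tendsto' 0 0 (zero_mul _)
      |>.eventually (eventually_lt_nhds ha)
  refine le_of_tendsto (x := 𝓝[>] (0 : ℝ)) (f := fun ε => lowerEnvelope f a - ε * (t - a)) ?_ ?_
  · exact tendsto_nhdsWithin_of_tendsto_nhds <| Continuous.tendsto' (by fun_prop) 0 _ (by simp)
  · filter_upwards [hsmall, self_mem_nhdsWithin] with ε hεb (hε : 0 < ε)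
    exact lowerEnvelope_sub_mul_le hf hmin hε hεb t ht

theorem monotoneOn_lowerEnvelope (hf : ∀ p, ∀ t ∈ Ico a b, HasDerivAt (f p) (d p t) t)
    (hmin : ∀ t ∈ Ico a b, 0 < lowerEnvelope f t → ∀ p, f p t = lowerEnvelope f t → 0 ≤ d p t)
    (ha : 0 < lowerEnvelope f a) : MonotoneOn (lowerEnvelope f) (Ico a b) := by
  have hsub : ∀ {s t}, s ∈ Ico a b → t ∈ Ico a b → Icc s t ⊆ Ico a b := fun hs ht _ hu =>
    ⟨hs.1.trans hu.1, hu.2.trans_lt ht.2⟩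
  have restrict : ∀ {s t}, s ∈ Ico a b → t ∈ Ico a b → 0 < lowerEnvelope f s → s ≤ t →
      lowerEnvelope f s ≤ lowerEnvelope f t := fun hs ht hpos hst =>
    lowerEnvelope_left_le (fun p u hu => hf p u (hsub hs ht hu))
      (fun u hu => hmin u (hsub hs ht (Ico_subset_Icc_self hu))) hpos ⟨hst, le_rfl⟩
  intro s hs t ht hst
  have haI : a ∈ Ico a b := ⟨le_rfl, hs.1.trans_lt hs.2⟩
  exact restrict hs ht (ha.trans_le (restrict haI hs ha hs.1)) hst

end LowerEnvelope

section Alignment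

variable {E : Type*} [NormedAddCommGroup E] [InnerProductSpace ℝ E]

def alignmentForce {ι : Type*} [Fintype ι] (c : ι → ℝ) (u : ι → E) (a : E) : E :=
  ∑ k, c k • (u k - ⟪u k, a⟫ • a)

theorem inner_mul_inner_le_inner {a b c : E} (ha : ‖a‖ ≤ 1) (hc : ‖c‖ ≤ 1) (hab : 0 ≤ ⟪a, b⟫)
    (hle : ⟪a, b⟫ ≤ ⟪c, b⟫) : ⟪c, a⟫ * ⟪a, b⟫ ≤ ⟪c, b⟫ := by
  have hca : ⟪c, a⟫ ≤ 1 := (real_inner_le_norm c a).trans (mul_le_one₀ hc (norm_nonneg a) ha)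
  exact (mul_le_of_le_one_left hab hca).trans hle

theorem inner_alignmentForce_nonneg {ι : Type*} [Fintype ι] {c : ι → ℝ} {u : ι → E} {a b : E}
    (hc : ∀ k, 0 ≤ c k) (hu : ∀ k, ‖u k‖ ≤ 1) (ha : ‖a‖ ≤ 1) (hab : 0 ≤ ⟪a, b⟫)
    (hle : ∀ k, ⟪a, b⟫ ≤ ⟪u k, b⟫) : 0 ≤ ⟪alignmentForce c u a, b⟫ := by
  rw [alignmentForce, sum_inner]
  refine Finset.sum_nonneg fun k _ => ?_
  rw [real_inner_smul_left, inner_sub_left, real_inner_smul_left]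
  exact mul_nonneg (hc k) (sub_nonneg.2 (inner_mul_inner_le_inner ha (hu k) hab (hle k)))

end Alignment

theorem velocity_angle_monotone_general {d : ℕ} {ι : Type*} [Fintype ι] [Nonempty ι]
    (κ₁ τ : ℝ) (hκ₁ : 0 < κ₁)
    (φ : ℝ → ℝ) (hφ : ∀ r, 0 ≤ φ r)
    (x v : ι → ℝ → EuclideanSpace ℝ (Fin d))
    (T : ι → ℝ → ℝ) (hT : ∀ j t, t ∈ Set.Ico 0 τ → 0 < T j t)
    (hunit : ∀ i t, t ∈ Set.Ico 0 τ → ‖v i t‖ = 1)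
    (hode : ∀ i t, t ∈ Set.Ico 0 τ → HasDerivAt (v i)
      ((κ₁ / (Fintype.card ι : ℝ)) •
        ∑ j, (φ ‖x i t - x j t‖ / T j t) • (v j t - ⟪v j t, v i t⟫ • v i t)) t)
    (hA0 : 0 < Finset.univ.inf' Finset.univ_nonempty
      (fun p : ι × ι => ⟪v p.1 0, v p.2 0⟫)) :
    MonotoneOn (fun t => Finset.univ.inf' Finset.univ_nonempty
        (fun p : ι × ι => ⟪v p.1 t, v p.2 t⟫)) (Set.Ico 0 τ) ∧
    ∀ t ∈ Set.Ico (0:ℝ) τ,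
      0 < Finset.univ.inf' Finset.univ_nonempty (fun p : ι × ι => ⟪v p.1 0, v p.2 0⟫) ∧
      Finset.univ.inf' Finset.univ_nonempty (fun p : ι × ι => ⟪v p.1 0, v p.2 0⟫) ≤
        Finset.univ.inf' Finset.univ_nonempty (fun p : ι × ι => ⟪v p.1 t, v p.2 t⟫) := by
  set F : ι × ι → ℝ → ℝ := fun p t => ⟪v p.1 t, v p.2 t⟫
  set w : ι → ℝ → EuclideanSpace ℝ (Fin d) := fun i t => (κ₁ / (Fintype.card ι : ℝ)) •
    alignmentForce (fun j => φ ‖x i t - x j t‖ / T j t) (fun j => v j t) (v i t)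
  have hforce : ∀ t ∈ Ico 0 τ, 0 < lowerEnvelope F t → ∀ i j,
      F (i, j) t = lowerEnvelope F t → 0 ≤ ⟪w i t, v j t⟫ := by
    intro t ht hpos i j hij
    have hnorm : ∀ k, ‖v k t‖ ≤ 1 := fun k => (hunit k t ht).le
    simp only [w, real_inner_smul_left]
    refine mul_nonneg (by positivity) ?_
    refine inner_alignmentForce_nonneg (fun k => div_nonneg (hφ _) (hT k t ht).le) hnorm
      (hnorm i) (hpos.le.trans_eq hij.symm) fun k => hij.trans_le (lowerEnvelope_le F t (k, j))
  have mono : MonotoneOn (lowerEnvelope F) (Ico 0 τ) := by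
    refine monotoneOn_lowerEnvelope (fun p t ht => (hode p.1 t ht).inner ℝ (hode p.2 t ht))
      (fun t ht hpos p hp => ?_) hA0
    have hswap : F (p.2, p.1) t = lowerEnvelope F t := (real_inner_comm _ _).trans hp
    rw [real_inner_comm]
    exact add_nonneg (hforce t ht hpos p.2 p.1 hswap) (hforce t ht hpos p.1 p.2 hp)
  exact ⟨mono, fun t ht => ⟨hA0, mono ⟨le_rfl, ht.1.trans_lt ht.2⟩ ht ht.1⟩⟩

/-- Monotonicity of the minimal pairwise velocity inner product
`A(v)(t) = min_{i,j} ⟪vᵢ(t), vⱼ(t)⟫` for the unit-speed thermodynamic Cucker-Smale system. -/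
theorem velocity_angle_monotone {d : ℕ} {ι : Type*} [Fintype ι] [Nonempty ι]
    (κ₁ τ : ℝ) (hκ₁ : 0 < κ₁) (hτ : 0 < τ)
    (φ : ℝ → ℝ) (hφ : ∀ r, 0 ≤ φ r)
    (x v : ι → ℝ → EuclideanSpace ℝ (Fin d))
    (T : ι → ℝ → ℝ) (hT : ∀ j t, t ∈ Set.Ico 0 τ → 0 < T j t)
    (hunit : ∀ i t, t ∈ Set.Ico 0 τ → ‖v i t‖ = 1)
    (hode : ∀ i t, t ∈ Set.Ico 0 τ → HasDerivAt (v i)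
      ((κ₁ / (Fintype.card ι : ℝ)) •
        ∑ j, (φ ‖x i t - x j t‖ / T j t) • (v j t - ⟪v j t, v i t⟫ • v i t)) t)
    (hA0 : 0 < Finset.univ.inf' Finset.univ_nonempty
      (fun p : ι × ι => ⟪v p.1 0, v p.2 0⟫)) :
    MonotoneOn (fun t => Finset.univ.inf' Finset.univ_nonempty
        (fun p : ι × ι => ⟪v p.1 t, v p.2 t⟫)) (Set.Ico 0 τ) ∧
    ∀ t ∈ Set.Ico (0:ℝ) τ,
      0 < Finset.univ.inf' Finset.univ_nonempty (fun p : ι × ι => ⟪v p.1 0, v p.2 0⟫) ∧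
      Finset.univ.inf' Finset.univ_nonempty (fun p : ι × ι => ⟪v p.1 0, v p.2 0⟫) ≤
        Finset.univ.inf' Finset.univ_nonempty (fun p : ι × ι => ⟪v p.1 t, v p.2 t⟫) :=
  velocity_angle_monotone_general κ₁ τ hκ₁ φ hφ x v T hT hunit hode hA0
end

section
/- Suppose D_X, D_V: [0,∞) → ℝ₊ are Lipschitz with |D_X'| ≤ D_V and D_V' ≤ −c φ(D_X) D_V a.e., where c > 0 and φ is nonincreasing and positive. If there exists D_X^∞ > 0 with D_X(0) + D_V(0)/(c φ(D_X^∞)) < D_X^∞, then D_X(t) < D_X^∞ for all t ≥ 0 and D_V(t) ≤ D_V(0) exp(−c φ(D_X^∞) t). -/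
/-!
While `D_X ≤ D_X^∞` on `[0, T)`, monotonicity of `φ` turns the dissipation inequality into
`D_V' ≤ -λ D_V` with `λ = c φ(D_X^∞)`, so `D_V e^{λ t}` is nonincreasing (FTC for absolutely
continuous functions) and `D_V` decays exponentially on `[0, T]`. Integrating `|D_X'| ≤ D_V` then
gives `D_X(T) ≤ D_X(0) + D_V(0) / λ`, strictly below `D_X^∞`. Since `D_X` is Lipschitz, this
a priori bound propagates in steps of a fixed length to all of `[0, ∞)`.
-/

open MeasureTheory Set Real
open scoped NNReal

theorem AbsolutelyContinuousOnInterval.sub_le_integral_of_ae_deriv_le {f g : ℝ → ℝ} {a b : ℝ}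
    (hab : a ≤ b) (hf : AbsolutelyContinuousOnInterval f a b)
    (hg : IntervalIntegrable g volume a b)
    (hle : ∀ᵐ x ∂volume.restrict (Ioo a b), deriv f x ≤ g x) :
    f b - f a ≤ ∫ x in a..b, g x := by
  rw [← hf.integral_deriv_eq_sub]
  refine intervalIntegral.integral_mono_ae_restrict hab hf.intervalIntegrable_deriv hg ?_
  rwa [Filter.EventuallyLE, ae_restrict_congr_set Ioo_ae_eq_Icc.symm]

theorem AbsolutelyContinuousOnInterval.le_mul_exp_of_ae_deriv_le
    {v : ℝ → ℝ} {r a b : ℝ}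
    (hab : a ≤ b) (hv : AbsolutelyContinuousOnInterval v a b)
    (hderiv : ∀ᵐ x ∂volume.restrict (Ioo a b), deriv v x ≤ -r * v x) :
    v b ≤ v a * exp (-r * (b - a)) := by
  set e : ℝ → ℝ := fun x => exp (r * x)
  have he : ∀ x, HasDerivAt e (r * e x) x := fun x => by
    simpa [e, mul_comm] using ((hasDerivAt_id x).const_mul r).exp
  have he_ac : AbsolutelyContinuousOnInterval e a b :=
    (contDiff_exp.comp (contDiff_const.mul contDiff_id)).contDiffOn
      |>.absolutelyContinuousOnInterval
  have hanti : v b * e b - v a * e a ≤ ∫ x in a..b, (0 : ℝ) := by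
    refine (hv.mul he_ac).sub_le_integral_of_ae_deriv_le hab intervalIntegrable_const ?_
    have hdiff := ae_restrict_of_ae (μ := volume) (s := Ioo a b) hv.ae_differentiableAt
    filter_upwards [hderiv, hdiff, ae_restrict_mem measurableSet_Ioo] with x hx hxd hxab
    rw [((hxd (Ioo_subset_Icc_self.trans Icc_subset_uIcc hxab)).hasDerivAt.mul (he x)).deriv]
    have := exp_pos (r * x)
    nlinarith
  have hexp : exp (-r * (b - a)) = e a / e b := by
    simp only [e, ← exp_sub]
    ring_nf
  rw [intervalIntegral.integral_zero, sub_nonpos] at hanti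
  rwa [hexp, mul_div_assoc', le_div_iff₀ (exp_pos _)]

theorem integral_exp_neg_mul_le {r T : ℝ} (hr : 0 < r) :
    ∫ x in (0 : ℝ)..T, exp (-r * x) ≤ 1 / r := by
  rw [intervalIntegral.integral_comp_mul_left (fun x => exp x) (neg_ne_zero.2 hr.ne'),
    integral_exp, mul_zero, exp_zero, smul_eq_mul, inv_neg, neg_mul, ← mul_neg, neg_sub,
    mul_comm, ← div_eq_mul_inv]
  gcongr
  linarith [exp_pos (-r * T)]

theorem LipschitzOnWith.absolutelyContinuousOnInterval_of_Ici {X : Type*} [PseudoMetricSpace X]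
    {f : ℝ → X} {K : ℝ≥0} {a b : ℝ} (hf : LipschitzOnWith K f (Ici a)) (hab : a ≤ b) :
    AbsolutelyContinuousOnInterval f a b :=
  (hf.mono fun _ hx => (uIcc_of_le hab ▸ hx).1).absolutelyContinuousOnInterval

theorem LipschitzOnWith.le_of_forall_Ico_le {f : ℝ → ℝ} {K : ℝ≥0} {M L t : ℝ}
    (hf : LipschitzOnWith K f (Ici 0)) (hML : M < L)
    (hbound : ∀ T, 0 ≤ T → (∀ s ∈ Ico 0 T, f s ≤ L) → f T ≤ M) (ht : 0 ≤ t) : f t ≤ M := by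
  obtain ⟨δ, hδ, hKδ⟩ : ∃ δ > 0, K * δ ≤ L - M := by
    refine ⟨(L - M) / (K + 1), by have := K.coe_nonneg; positivity, ?_⟩
    rw [← mul_div_assoc, div_le_iff₀ (by positivity)]
    nlinarith [K.coe_nonneg]
  -- On a step of length `δ`, `f` climbs by at most `K * δ ≤ L - M`.
  have hsteps : ∀ n : ℕ, ∀ s ∈ Ico 0 (n * δ), f s ≤ L := by
    intro n
    induction n with
    | zero => simp
    | succ n ih =>
      rintro s ⟨hs₀, hs⟩
      rcases lt_or_ge s (n * δ) with hsn | hsn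
      · exact ih s ⟨hs₀, hsn⟩
      have hfn := hbound (n * δ) (by positivity) ih
      have hlip := hf.le_add_mul hs₀ (y := n * δ) (mem_Ici.2 (by positivity))
      rw [Real.dist_eq, abs_of_nonneg (sub_nonneg.2 hsn)] at hlip
      push_cast at hs
      nlinarith [K.coe_nonneg]
  obtain ⟨n, hn⟩ := exists_nat_gt (t / δ)
  refine hbound t ht fun s hs => hsteps n s ⟨hs.1, hs.2.trans ?_⟩
  rwa [div_lt_iff₀ hδ] at hn

/-- Bootstrapping argument for asymptotic flocking: if `|D_X'| ≤ D_V` and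
`D_V' ≤ −c φ(D_X) D_V` a.e., and `D_X(0) + D_V(0)/(c φ(D_X^∞)) < D_X^∞`, then
`D_X` stays below `D_X^∞` and `D_V` decays exponentially. -/
theorem flocking_bootstrap (c DXinf : ℝ) (hc : 0 < c) (hDXinf : 0 < DXinf)
    (φ : ℝ → ℝ) (hφpos : ∀ r, 0 ≤ r → 0 < φ r) (hφmono : AntitoneOn φ (Set.Ici 0))
    (DX DV : ℝ → ℝ)
    (hDXnn : ∀ t, 0 ≤ t → 0 ≤ DX t) (hDVnn : ∀ t, 0 ≤ t → 0 ≤ DV t)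
    (K₁ K₂ : NNReal) (hL₁ : LipschitzOnWith K₁ DX (Set.Ici 0))
    (hL₂ : LipschitzOnWith K₂ DV (Set.Ici 0))
    (hderiv : ∀ᵐ t ∂(volume.restrict (Set.Ioi (0:ℝ))),
      |deriv DX t| ≤ DV t ∧ deriv DV t ≤ -(c * φ (DX t)) * DV t)
    (hinit : DX 0 + DV 0 / (c * φ DXinf) < DXinf) :
    ∀ t, 0 ≤ t → DX t < DXinf ∧ DV t ≤ DV 0 * Real.exp (-(c * φ DXinf) * t) := by
  set r := c * φ DXinf
  have hr : 0 < r := mul_pos hc (hφpos _ hDXinf.le)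
  have hderiv_on (T : ℝ) : ∀ᵐ t ∂volume.restrict (Ioo 0 T),
      |deriv DX t| ≤ DV t ∧ deriv DV t ≤ -(c * φ (DX t)) * DV t :=
    ae_restrict_of_ae_restrict_of_subset Ioo_subset_Ioi_self hderiv
  have decay : ∀ T, 0 ≤ T → (∀ s ∈ Ico 0 T, DX s ≤ DXinf) → DV T ≤ DV 0 * exp (-r * T) := by
    intro T hT hDX
    simpa using (hL₂.absolutelyContinuousOnInterval_of_Ici hT).le_mul_exp_of_ae_deriv_le hT <| by
      filter_upwards [hderiv_on T, ae_restrict_mem measurableSet_Ioo] with x hx ⟨hx₀, hxT⟩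
      have hφ : φ DXinf ≤ φ (DX x) :=
        hφmono (hDXnn x hx₀.le) hDXinf.le (hDX x ⟨hx₀.le, hxT⟩)
      nlinarith [hx.2, hDVnn x hx₀.le, mul_le_mul_of_nonneg_left hφ hc.le]
  have bound : ∀ T, 0 ≤ T → (∀ s ∈ Ico 0 T, DX s ≤ DXinf) → DX T ≤ DX 0 + DV 0 / r := by
    intro T hT hDX
    have hcont : Continuous fun s => DV 0 * exp (-r * s) := by fun_prop
    have hgrowth := (hL₁.absolutelyContinuousOnInterval_of_Ici hT).sub_le_integral_of_ae_deriv_le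
      hT (hcont.intervalIntegrable 0 T) <| by
        filter_upwards [hderiv_on T, ae_restrict_mem measurableSet_Ioo] with x hx ⟨hx₀, hxT⟩
        exact (le_abs_self _).trans <| hx.1.trans <|
          decay x hx₀.le fun s hs => hDX s ⟨hs.1, hs.2.trans hxT⟩
    rw [intervalIntegral.integral_const_mul] at hgrowth
    have := mul_le_mul_of_nonneg_left (integral_exp_neg_mul_le (T := T) hr) (hDVnn 0 le_rfl)
    rw [div_eq_mul_one_div]
    linarith
  have below (t : ℝ) (ht : 0 ≤ t) : DX t ≤ DX 0 + DV 0 / r :=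
    hL₁.le_of_forall_Ico_le hinit bound ht
  exact fun t ht => ⟨(below t ht).trans_lt hinit,
    decay t ht fun s hs => ((below s hs.1).trans_lt hinit).le⟩
end

section
/- Let D_T(t) = max_{i,j} |T_i(t) − T_j(t)| along the temperature dynamics with temperatures bounded in [T_m^∞, T_M^∞] and pairwise weights ζ_{ij} ≥ ζ(D_X^∞) > 0. Then dD_T/dt ≤ −(κ₂ ζ(D_X^∞)/(T_M^∞)²) D_T a.e., and hence D_T(t) ≤ D_T(0) exp(−κ₂ ζ(D_X^∞) t/(T_M^∞)²). -/
/-!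
Let `c = κ₂ ζ(D_X^∞)/(T_M^∞)²`. At a time `t`, let the pair `(M, m)` realise the spread
`D = max_{i,j} (Tᵢ − Tⱼ)`, so `T_M` is maximal and `T_m` minimal. In `Ṫ_M − Ṫ_m` every summand
`ζ_{Mj}(1/T_M − 1/T_j) − ζ_{mj}(1/T_m − 1/T_j)` is at most
`ζ(D_X^∞)(1/T_M − 1/T_m) ≤ −ζ(D_X^∞) D/(T_M^∞)²`. Since `D` is a finite maximum of differentiable
functions, its upper right Dini derivative is bounded by the derivatives of the active pairs,
hence by `−c D`; Gronwall's inequality for Dini derivatives gives `D(t) ≤ D(0) e^{−ct}`. Then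
`D(t) e^{ct}` is antitone, so `D` is differentiable almost everywhere, and at such points its
derivative is the limit of the right slopes, which is at most `−c D`.
-/

open MeasureTheory Set Filter Topology

theorem Finset.eventually_slope_sup'_lt {α : Type*} {s : Finset α} (hs : s.Nonempty)
    {f : α → ℝ → ℝ} {f' : α → ℝ} {x B r : ℝ} (hf : ∀ p ∈ s, HasDerivAt (f p) (f' p) x)
    (hB : ∀ p ∈ s, f p x = s.sup' hs (f · x) → f' p ≤ B) (hr : B < r) :
    ∀ᶠ z in 𝓝[>] x, slope (fun y => s.sup' hs (f · y)) x z < r := by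
  have hbelow : ∀ p ∈ s, ∀ᶠ z in 𝓝[>] x, f p z < s.sup' hs (f · x) + r * (z - x) := by
    intro p hp
    rcases (s.le_sup' (f · x) hp).eq_or_lt with hact | hinact
    · filter_upwards [(hf p hp).hasDerivWithinAt.limsup_slope_le' (lt_irrefl x)
        ((hB p hp hact).trans_lt hr), self_mem_nhdsWithin] with z hz (hxz : x < z)
      rw [slope_def_field, div_lt_iff₀ (sub_pos.2 hxz)] at hz
      linarith
    · refine nhdsWithin_le_nhds ((hf p hp).continuousAt.eventually_lt ?_ ?_)
      · fun_prop
      · simpa only [sub_self, mul_zero, add_zero] using hinact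
  filter_upwards [(eventually_all_finset s).2 hbelow, self_mem_nhdsWithin]
    with z hz (hxz : x < z)
  rw [slope_def_field, div_lt_iff₀ (sub_pos.2 hxz), sub_lt_iff_lt_add', Finset.sup'_lt_iff]
  exact hz

theorem deriv_le_of_eventually_slope_lt {f : ℝ → ℝ} {x B : ℝ} (hf : DifferentiableAt ℝ f x)
    (h : ∀ r, B < r → ∀ᶠ z in 𝓝[>] x, slope f x z < r) : deriv f x ≤ B := by
  have hlim : Tendsto (slope f x) (𝓝[>] x) (𝓝 (deriv f x)) :=
    (hasDerivAt_iff_tendsto_slope.1 hf.hasDerivAt).mono_left (nhdsGT_le_nhdsNE x)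
  exact le_of_forall_gt_imp_ge_of_dense fun r hr =>
    le_of_tendsto hlim ((h r hr).mono fun _ hz => hz.le)

theorem le_mul_exp_of_eventually_slope_lt {D : ℝ → ℝ} {a b c : ℝ}
    (hcont : ContinuousOn D (Icc a b))
    (hslope : ∀ x ∈ Ico a b, ∀ r, -c * D x < r → ∀ᶠ z in 𝓝[>] x, slope D x z < r)
    (hab : a ≤ b) : D b ≤ D a * Real.exp (-c * (b - a)) := by
  rw [← gronwallBound_ε0]
  exact le_gronwallBound_of_liminf_deriv_right_le (f' := fun x => -c * D x) hcont
    (fun x hx r hr => (hslope x hx r hr).frequently) le_rfl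
    (fun x _ => by rw [add_zero]) b ⟨hab, le_rfl⟩

theorem ae_differentiableAt_of_antitoneOn_mul_exp {D : ℝ → ℝ} {c : ℝ} {s : Set ℝ}
    (hs : IsOpen s) (h : AntitoneOn (fun t => D t * Real.exp (c * t)) s) :
    ∀ᵐ t ∂volume.restrict s, DifferentiableAt ℝ D t := by
  have hD : D = fun t => -(-(D t * Real.exp (c * t))) * Real.exp (-(c * t)) := by
    ext t
    rw [neg_neg, mul_assoc, ← Real.exp_add, add_neg_cancel, Real.exp_zero, mul_one]
  filter_upwards [h.neg.ae_differentiableWithinAt hs.measurableSet,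
    ae_restrict_mem hs.measurableSet] with t hdiff ht
  rw [hD]
  exact (hdiff.differentiableAt (hs.mem_nhds ht)).neg.mul (by fun_prop)

theorem ae_deriv_le_and_le_mul_exp_of_eventually_slope_lt {D : ℝ → ℝ} {a c : ℝ}
    (hcont : ContinuousOn D (Ici a))
    (hslope : ∀ x ∈ Ici a, ∀ r, -c * D x < r → ∀ᶠ z in 𝓝[>] x, slope D x z < r) :
    (∀ᵐ t ∂volume.restrict (Ioi a), deriv D t ≤ -c * D t) ∧
      ∀ t, a ≤ t → D t ≤ D a * Real.exp (-c * (t - a)) := by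
  have hdecay : ∀ x ∈ Ici a, ∀ y, x ≤ y → D y ≤ D x * Real.exp (-c * (y - x)) :=
    fun x hx y hxy => le_mul_exp_of_eventually_slope_lt
      (hcont.mono (Icc_subset_Ici_self.trans (Ici_subset_Ici.2 hx)))
      (fun z hz => hslope z (le_trans hx hz.1)) hxy
  have hanti : AntitoneOn (fun t => D t * Real.exp (c * t)) (Ioi a) := by
    intro x hx y _ hxy
    calc D y * Real.exp (c * y) ≤ D x * Real.exp (-c * (y - x)) * Real.exp (c * y) :=
          mul_le_mul_of_nonneg_right (hdecay x (Ioi_subset_Ici_self hx) y hxy) (Real.exp_pos _).le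
      _ = D x * Real.exp (c * x) := by rw [mul_assoc, ← Real.exp_add]; ring_nf
  refine ⟨?_, hdecay a self_mem_Ici⟩
  filter_upwards [ae_differentiableAt_of_antitoneOn_mul_exp isOpen_Ioi hanti,
    ae_restrict_mem measurableSet_Ioi] with t hdiff ht
  exact deriv_le_of_eventually_slope_lt hdiff (hslope t (Ioi_subset_Ici_self ht))

theorem one_div_sub_one_div_le_neg_sub_div_sq {a b M : ℝ} (hb : 0 < b) (hba : b ≤ a)
    (haM : a ≤ M) : 1 / a - 1 / b ≤ -((a - b) / M ^ 2) := by
  have ha : 0 < a := hb.trans_le hba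
  have hab : a * b ≤ M ^ 2 := by nlinarith
  rw [div_sub_div _ _ ha.ne' hb.ne', one_mul, mul_one, ← neg_sub a b, neg_div, neg_le_neg_iff]
  exact div_le_div_of_nonneg_left (sub_nonneg.2 hba) (mul_pos ha hb) hab

theorem isMax_fst_isMin_snd_of_sub_eq_sup' {ι : Type*} [Fintype ι] [Nonempty ι] {u : ι → ℝ}
    {p : ι × ι} (hp : u p.1 - u p.2 = Finset.univ.sup' Finset.univ_nonempty
      (fun q : ι × ι => u q.1 - u q.2)) :
    (∀ j, u j ≤ u p.1) ∧ ∀ j, u p.2 ≤ u j := by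
  have hle := fun q : ι × ι => hp ▸ Finset.le_sup' (fun q : ι × ι => u q.1 - u q.2)
    (Finset.mem_univ q)
  exact ⟨fun j => by linarith [hle (j, p.2)], fun j => by linarith [hle (p.1, j)]⟩

section Flux

variable {ι : Type*} [Fintype ι] {w : ι → ι → ℝ} {u : ι → ℝ} {ζ : ℝ} {M m : ι}

theorem sum_flux_sub_le_of_isMax_of_isMin (hw : ∀ i j, ζ ≤ w i j) (hu : ∀ i, 0 < u i)
    (hM : ∀ j, u j ≤ u M) (hm : ∀ j, u m ≤ u j) :
    ∑ j, w M j * (1 / u M - 1 / u j) - ∑ j, w m j * (1 / u m - 1 / u j) ≤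
      Fintype.card ι * (ζ * (1 / u M - 1 / u m)) := by
  have hterm : ∀ j, w M j * (1 / u M - 1 / u j) - w m j * (1 / u m - 1 / u j) ≤
      ζ * (1 / u M - 1 / u m) := by
    intro j
    have hMj : 1 / u M - 1 / u j ≤ 0 := sub_nonpos.2 (one_div_le_one_div_of_le (hu j) (hM j))
    have hmj : 0 ≤ 1 / u m - 1 / u j := sub_nonneg.2 (one_div_le_one_div_of_le (hu m) (hm j))
    nlinarith [mul_le_mul_of_nonpos_right (hw M j) hMj, mul_le_mul_of_nonneg_right (hw m j) hmj]
  rw [← Finset.sum_sub_distrib]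
  simpa using Finset.sum_le_sum fun j (_ : j ∈ Finset.univ) => hterm j

theorem flux_sub_le_of_isMax_of_isMin {κ TM : ℝ} (hκ : 0 ≤ κ) (hζ : 0 ≤ ζ)
    (hw : ∀ i j, ζ ≤ w i j) (hu : ∀ i, 0 < u i) (huTM : ∀ i, u i ≤ TM)
    (hM : ∀ j, u j ≤ u M) (hm : ∀ j, u m ≤ u j) :
    κ / Fintype.card ι * ∑ j, w M j * (1 / u M - 1 / u j) -
        κ / Fintype.card ι * ∑ j, w m j * (1 / u m - 1 / u j) ≤
      -(κ * ζ / TM ^ 2) * (u M - u m) := by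
  have hN : (0 : ℝ) < Fintype.card ι := by
    have : Nonempty ι := ⟨M⟩
    exact_mod_cast Fintype.card_pos
  calc κ / Fintype.card ι * ∑ j, w M j * (1 / u M - 1 / u j) -
        κ / Fintype.card ι * ∑ j, w m j * (1 / u m - 1 / u j)
      = κ / Fintype.card ι * (∑ j, w M j * (1 / u M - 1 / u j) -
          ∑ j, w m j * (1 / u m - 1 / u j)) := by ring
    _ ≤ κ / Fintype.card ι * (Fintype.card ι * (ζ * (1 / u M - 1 / u m))) :=
        mul_le_mul_of_nonneg_left (sum_flux_sub_le_of_isMax_of_isMin hw hu hM hm)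
          (div_nonneg hκ hN.le)
    _ = κ * ζ * (1 / u M - 1 / u m) := by field_simp
    _ ≤ κ * ζ * -((u M - u m) / TM ^ 2) :=
        mul_le_mul_of_nonneg_left
          (one_div_sub_one_div_le_neg_sub_div_sq (hu m) (hM m) (huTM M)) (mul_nonneg hκ hζ)
    _ = -(κ * ζ / TM ^ 2) * (u M - u m) := by ring

end Flux

theorem Finset.sup'_univ_abs_sub {ι : Type*} [Fintype ι] [Nonempty ι] (u : ι → ℝ) :
    Finset.univ.sup' Finset.univ_nonempty (fun p : ι × ι => |u p.1 - u p.2|) =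
      Finset.univ.sup' Finset.univ_nonempty (fun p : ι × ι => u p.1 - u p.2) := by
  refine le_antisymm (Finset.sup'_le _ _ fun p _ => abs_sub_le_iff.2 ⟨?_, ?_⟩)
    (Finset.sup'_mono_fun fun p _ => le_abs_self _)
  · exact Finset.le_sup' (fun p : ι × ι => u p.1 - u p.2) (Finset.mem_univ p)
  · exact Finset.le_sup' (fun p : ι × ι => u p.1 - u p.2) (Finset.mem_univ p.swap)

theorem temperature_diameter_decay_general {ι : Type*} [Fintype ι] [Nonempty ι]
    (κ₂ Tm TM ζinf : ℝ) (hκ₂ : 0 < κ₂) (hTm : 0 < Tm) (hζinf : 0 < ζinf)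
    (T : ι → ℝ → ℝ) (ζw : ι → ι → ℝ → ℝ)
    (hζlb : ∀ i j t, 0 ≤ t → ζinf ≤ ζw i j t)
    (hbd : ∀ i t, 0 ≤ t → Tm ≤ T i t ∧ T i t ≤ TM)
    (hode : ∀ i t, 0 ≤ t → HasDerivAt (T i)
      ((κ₂ / (Fintype.card ι : ℝ)) * ∑ j, ζw i j t * (1 / T i t - 1 / T j t)) t) :
    (∀ᵐ t ∂(volume.restrict (Set.Ioi (0:ℝ))),
      deriv (fun s => Finset.univ.sup' Finset.univ_nonempty
          (fun p : ι × ι => |T p.1 s - T p.2 s|)) t ≤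
        -(κ₂ * ζinf / TM ^ 2) * Finset.univ.sup' Finset.univ_nonempty
          (fun p : ι × ι => |T p.1 t - T p.2 t|)) ∧
    ∀ t, 0 ≤ t →
      Finset.univ.sup' Finset.univ_nonempty (fun p : ι × ι => |T p.1 t - T p.2 t|) ≤
        Finset.univ.sup' Finset.univ_nonempty (fun p : ι × ι => |T p.1 0 - T p.2 0|) *
          Real.exp (-(κ₂ * ζinf / TM ^ 2) * t) := by
  have hdiff : ∀ p : ι × ι, ∀ t ∈ Ici (0 : ℝ), HasDerivAt (fun s => T p.1 s - T p.2 s)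
      (κ₂ / Fintype.card ι * ∑ j, ζw p.1 j t * (1 / T p.1 t - 1 / T j t) -
        κ₂ / Fintype.card ι * ∑ j, ζw p.2 j t * (1 / T p.2 t - 1 / T j t)) t :=
    fun p t ht => (hode p.1 t ht).sub (hode p.2 t ht)
  have habs : ∀ s, Finset.univ.sup' Finset.univ_nonempty (fun p : ι × ι => |T p.1 s - T p.2 s|) =
      Finset.univ.sup' Finset.univ_nonempty (fun p : ι × ι => T p.1 s - T p.2 s) :=
    fun s => Finset.sup'_univ_abs_sub fun i => T i s
  simp only [habs]
  simpa only [sub_zero] using ae_deriv_le_and_le_mul_exp_of_eventually_slope_lt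
    (ContinuousOn.finset_sup'_apply _ fun p _ t ht =>
      (hdiff p t ht).continuousAt.continuousWithinAt)
    fun t ht r hr => Finset.eventually_slope_sup'_lt _ (fun p _ => hdiff p t ht)
      (fun p _ hp => by
        obtain ⟨hM, hm⟩ := isMax_fst_isMin_snd_of_sub_eq_sup' (u := fun i => T i t) hp
        rw [← hp]
        exact flux_sub_le_of_isMax_of_isMin hκ₂.le hζinf.le (fun i j => hζlb i j t ht)
          (fun i => hTm.trans_le (hbd i t ht).1) (fun i => (hbd i t ht).2) hM hm) hr

/-- Exponential decay of the temperature diameter `D_T(t) = max_{i,j} |Tᵢ(t) − Tⱼ(t)|`: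
`dD_T/dt ≤ −(κ₂ ζ(D_X^∞)/(T_M^∞)²) D_T` a.e., hence
`D_T(t) ≤ D_T(0) exp(−κ₂ ζ(D_X^∞) t/(T_M^∞)²)`. -/
theorem temperature_diameter_decay {ι : Type*} [Fintype ι] [Nonempty ι]
    (κ₂ Tm TM ζinf : ℝ) (hκ₂ : 0 < κ₂) (hTm : 0 < Tm) (hTmTM : Tm ≤ TM) (hζinf : 0 < ζinf)
    (T : ι → ℝ → ℝ) (ζw : ι → ι → ℝ → ℝ)
    (hζsym : ∀ i j t, ζw i j t = ζw j i t)
    (hζlb : ∀ i j t, 0 ≤ t → ζinf ≤ ζw i j t)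
    (hbd : ∀ i t, 0 ≤ t → Tm ≤ T i t ∧ T i t ≤ TM)
    (hode : ∀ i t, 0 ≤ t → HasDerivAt (T i)
      ((κ₂ / (Fintype.card ι : ℝ)) * ∑ j, ζw i j t * (1 / T i t - 1 / T j t)) t) :
    (∀ᵐ t ∂(volume.restrict (Set.Ioi (0:ℝ))),
      deriv (fun s => Finset.univ.sup' Finset.univ_nonempty
          (fun p : ι × ι => |T p.1 s - T p.2 s|)) t ≤
        -(κ₂ * ζinf / TM ^ 2) * Finset.univ.sup' Finset.univ_nonempty
          (fun p : ι × ι => |T p.1 t - T p.2 t|)) ∧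
    ∀ t, 0 ≤ t →
      Finset.univ.sup' Finset.univ_nonempty (fun p : ι × ι => |T p.1 t - T p.2 t|) ≤
        Finset.univ.sup' Finset.univ_nonempty (fun p : ι × ι => |T p.1 0 - T p.2 0|) *
          Real.exp (-(κ₂ * ζinf / TM ^ 2) * t) :=
  temperature_diameter_decay_general κ₂ Tm TM ζinf hκ₂ hTm hζinf T ζw hζlb hbd hode
end

section
/- If the velocity diameter satisfies ∫₀^∞ D_V(s) ds ≤ M and the initial minimal separation min_{i≠j} |x_i^k(0) − x_j^k(0)| in some coordinate k strictly exceeds M, then for all i ≠ j and all t ≥ 0, ‖x_i(t) − x_j(t)‖ ≥ min_{i≠j}|x_i^k(0) − x_j^k(0)| − M > 0; i.e., the particles maintain strict spacing and never collide. -/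
open MeasureTheory Set

theorem norm_sub_le_setIntegral_Ioi_of_hasDerivAt {E : Type*} [NormedAddCommGroup E]
    [NormedSpace ℝ E] {f f' : ℝ → E} {B : ℝ → ℝ} {a t : ℝ} (hat : a ≤ t)
    (hf : ∀ s, a ≤ s → HasDerivAt f (f' s) s) (hf'B : ∀ s, a < s → ‖f' s‖ ≤ B s)
    (hB : IntegrableOn B (Ioi a)) :
    ‖f t - f a‖ ≤ ∫ s in Ioi a, B s := by
  have hBt : IntervalIntegrable B volume a t :=
    (intervalIntegrable_iff_integrableOn_Ioc_of_le hat).2 (hB.mono_set Ioc_subset_Ioi_self)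
  calc ‖f t - f a‖ ≤ ∫ s in a..t, B s := by
        refine norm_sub_le_integral_of_norm_deriv_le_of_le hat
          (fun s hs => (hf s hs.1).continuousAt.continuousWithinAt)
          (fun s hs => (hf s hs.1.le).differentiableAt.differentiableWithinAt)
          (.of_forall fun s hs => ?_) hBt
        rw [(hf s hs.1.le).deriv]
        exact hf'B s hs.1
    _ = ∫ s in Ioc a t, B s := intervalIntegral.integral_of_le hat
    _ ≤ ∫ s in Ioi a, B s :=
        setIntegral_mono_set hB
          ((ae_restrict_iff' measurableSet_Ioi).2 (.of_forall fun s hs =>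
            (norm_nonneg _).trans (hf'B s hs)))
          (.of_forall Ioc_subset_Ioi_self)

/-- Strict spacing: if `∫₀^∞ D_V ≤ M` and the minimal initial separation in some coordinate `k`
strictly exceeds `M`, then for all `i ≠ j` and all `t ≥ 0`,
`‖xᵢ(t) − xⱼ(t)‖ ≥ min_{i≠j} |xᵢᵏ(0) − xⱼᵏ(0)| − M > 0`. -/
theorem strict_spacing {d : ℕ} {ι : Type*} [Fintype ι] [DecidableEq ι] [Nontrivial ι]
    (M : ℝ) (k : Fin d)
    (x v : ι → ℝ → EuclideanSpace ℝ (Fin d))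
    (hx : ∀ i t, 0 ≤ t → HasDerivAt (x i) (v i t) t)
    (DV : ℝ → ℝ)
    (hDV : DV = fun t => Finset.univ.sup' Finset.univ_nonempty
      (fun p : ι × ι => ‖v p.1 t - v p.2 t‖))
    (hDVint : IntegrableOn DV (Set.Ioi 0))
    (hM : (∫ s in Set.Ioi (0:ℝ), DV s) ≤ M)
    (m : ℝ)
    (hm : m = (Finset.univ.filter fun p : ι × ι => p.1 ≠ p.2).inf'
      (by simp [Finset.filter_nonempty_iff]; exact exists_pair_ne ι)
      (fun p : ι × ι => |x p.1 0 k - x p.2 0 k|))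
    (hsep : M < m) :
    ∀ i j : ι, i ≠ j → ∀ t, 0 ≤ t → m - M ≤ ‖x i t - x j t‖ ∧ 0 < m - M := by
  intro i j hij t ht
  refine ⟨?_, sub_pos.2 hsep⟩
  have hinit : m ≤ ‖(x i 0 - x j 0) k‖ := by
    rw [hm, PiLp.sub_apply, Real.norm_eq_abs]
    exact Finset.inf'_le (fun p : ι × ι => |x p.1 0 k - x p.2 0 k|)
      (Finset.mem_filter.2 ⟨Finset.mem_univ (i, j), hij⟩)
  have hdrift : ‖(x i t - x j t) - (x i 0 - x j 0)‖ ≤ M := by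
    refine (norm_sub_le_setIntegral_Ioi_of_hasDerivAt (f := fun s => x i s - x j s) ht
      (fun s hs => (hx i s hs).sub (hx j s hs)) (fun s _ => ?_) hDVint).trans hM
    rw [hDV]
    exact Finset.le_sup' (fun p : ι × ι => ‖v p.1 s - v p.2 s‖) (Finset.mem_univ (i, j))
  calc m - M ≤ ‖x i 0 - x j 0‖ - ‖(x i t - x j t) - (x i 0 - x j 0)‖ := by
        gcongr
        exact hinit.trans (PiLp.norm_apply_le _ k)
    _ ≤ ‖x i t - x j t‖ := by
        linarith [norm_le_norm_add_norm_sub (x i t - x j t) (x i 0 - x j 0)]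
end
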